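/- Let π be a uniformly random bijection E → {1,…,m} on the edge set of a finite hypergraph H = (V,E), run the sequential greedy matching on π, and let d_1,…,d_m be a fixed (adversarially chosen but π-independent) deletion order listing all edges of E. Then for every t ∈ {1,…,m}, if the event that the deletion of d_t is early has positive probability, the conditional expectation of the payment satisfies E[Φ(d_t) | d_t is early] ≤ 2. -/

import Mathlib

/-!
For a uniformly random priority bijection `π : E ≃ Fin m` and a fixed
(`π`-independent) deletion order `d₁,…,d_m` listing all edges, for every time
`t`, if the event "the deletion of `d_t` is early" has positive probability,
then the conditional expectation of the payment satisfies
`𝔼[Φ(d_t) ∣ d_t is early] ≤ 2`.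

The deletion of `d_t` is early if its owner `p(d_t)` is not among
`d₁,…,d_{t-1}`; `U(d_t) = S_{p(d_t)} \ {d₁,…,d_{t-1}}`; the payment is
`Φ(d_t) = 1` if `d_t` is early and `d_t ≠ p(d_t)`, and `Φ(d_t) = |U(d_t)|`
if `d_t = p(d_t)`.
-/

open Finset

open scoped Classical

variable {V E : Type*}

/-- Two hyperedges are incident if they share a vertex. -/
def Incident [DecidableEq V] (vert : E → Finset V) (e f : E) : Prop :=
  (vert e ∩ vert f).Nonempty

/-- `Matched vert π e` holds iff the sequential greedy matching (processing the
edges in increasing `π`-order, selecting an edge iff it is still free when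
processed) selects `e`. -/
def Matched [DecidableEq V] (vert : E → Finset V) (π : E → ℕ) (e : E) : Prop :=
  ∀ f, π f < π e → Incident vert f e → ¬ Matched vert π f
termination_by π e

/-- The matched edge owning `e` (the `π`-least matched edge incident to `e`),
i.e. the matched edge `p(e)` whose sample space `e` belongs to. -/
noncomputable def owner [DecidableEq V] (vert : E → Finset V) (π : E → ℕ) (e : E) : E :=
  if h : ∃ f, (Matched vert π f ∧ Incident vert f e) ∧
      ∀ f', Matched vert π f' → Incident vert f' e → π f ≤ π f' then
    h.choose
  else e

/-- The deletion of `d_t` (the `t`-th deleted edge, `d_t = del t`) is early if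
its matched edge `p(d_t)` is not among the previously deleted `d₁,…,d_{t-1}`. -/
def EarlyAt [DecidableEq V] (vert : E → Finset V) (π : E → ℕ) {m : ℕ}
    (del : Fin m ≃ E) (t : Fin m) : Prop :=
  ∀ s : Fin m, s < t → del s ≠ owner vert π (del t)

/-- `U(d_t) = S_{p(d_t)} \ {d₁,…,d_{t-1}}`:  the edges of the sample space of
`p(d_t)` not yet deleted just before time `t`. -/
noncomputable def Uset [DecidableEq V] [DecidableEq E] [Fintype E]
    (vert : E → Finset V) (π : E → ℕ) {m : ℕ} (del : Fin m ≃ E) (t : Fin m) : Finset E :=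
  Finset.univ.filter fun e =>
    owner vert π e = owner vert π (del t) ∧ ∀ s : Fin m, s < t → del s ≠ e

/-- The payment `Φ'(d_t)`:  `1` if the deletion of `d_t` is early and
`d_t ≠ p(d_t)`, `|U(d_t)|` if `d_t = p(d_t)` (such a deletion is early), and
`0` if the deletion is late. -/
noncomputable def payment [DecidableEq V] [DecidableEq E] [Fintype E]
    (vert : E → Finset V) (π : E → ℕ) {m : ℕ} (del : Fin m ≃ E) (t : Fin m) : ℕ :=
  if EarlyAt vert π del t then
    (if del t = owner vert π (del t) then (Uset vert π del t).card else 1)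
  else 0

/-!
Split the early deletions of `d_t` into those with `p(d_t) = d_t`, paying `|U(d_t)|`, and the
others, paying `1`. Exchanging the priorities of a self-owned `d_t` and of some other
`e ∈ U(d_t)` changes nothing in the greedy process below the priority of `d_t`, so afterwards
`e` is matched and owns `d_t`, and since `e` is not yet deleted the deletion stays early. The
pair `(π, e)` is recovered from the new order, so `∑ (|U(d_t)| - 1)` over the self-owned early
orders is at most the number of the other early orders, and the total payment is at most twice
the number of early orders.
-/

section Greedy

variable [DecidableEq V] {vert : E → Finset V}

theorem Incident.symm {e f : E} (h : Incident vert e f) : Incident vert f e := by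
  rwa [Incident, Finset.inter_comm]

theorem incident_self {e : E} (he : (vert e).Nonempty) : Incident vert e e := by
  simpa [Incident] using he

theorem matched_iff (p : E → ℕ) (e : E) :
    Matched vert p e ↔ ∀ f, p f < p e → Incident vert f e → ¬ Matched vert p f := by
  rw [Matched]

theorem matched_iff_of_agree_below {p q : E → ℕ} {k : ℕ}
    (hpq : ∀ f, p f < k ∨ q f < k → p f = q f) {e : E} (he : p e < k) :
    Matched vert p e ↔ Matched vert q e := by
  induction hn : p e using Nat.strong_induction_on generalizing e with
  | _ n ih =>
    have hpe : p e = q e := hpq e (.inl he)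
    rw [matched_iff, matched_iff]
    refine forall_congr' fun f => ?_
    by_cases hf : p f < p e
    · have hqf : q f < q e := by rw [← hpq f (.inl (by omega)), ← hpe]; exact hf
      rw [ih (p f) (by omega) (by omega) rfl]
      simp only [hf, hqf]
    · have hqf : ¬ q f < q e := fun h => hf (by rw [hpq f (.inr (by omega)), hpe]; exact h)
      simp only [hf, hqf, false_implies]

theorem exists_matched_incident_le (p : E → ℕ) {e : E} (he : (vert e).Nonempty) :
    ∃ f, Matched vert p f ∧ Incident vert f e ∧ p f ≤ p e := by
  by_cases hM : Matched vert p e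
  · exact ⟨e, hM, incident_self he, le_rfl⟩
  · rw [matched_iff] at hM
    push Not at hM
    obtain ⟨f, hlt, hinc, hf⟩ := hM
    exact ⟨f, hf, hinc, hlt.le⟩

theorem owner_spec (p : E → ℕ) {e : E} (he : (vert e).Nonempty) :
    (Matched vert p (owner vert p e) ∧ Incident vert (owner vert p e) e) ∧
      ∀ f, Matched vert p f → Incident vert f e → p (owner vert p e) ≤ p f := by
  have hex : ∃ f, (Matched vert p f ∧ Incident vert f e) ∧
      ∀ f', Matched vert p f' → Incident vert f' e → p f ≤ p f' := by
    obtain ⟨f₀, hf₀, hf₀e, -⟩ := exists_matched_incident_le p he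
    let S := {f | Matched vert p f ∧ Incident vert f e}
    exact ⟨Function.argminOn p S ⟨f₀, hf₀, hf₀e⟩, Function.argminOn_mem p S _,
      fun f hf hfe => Function.argminOn_le p S ⟨hf, hfe⟩⟩
  rw [owner, dif_pos hex]
  exact hex.choose_spec

theorem owner_le_self (p : E → ℕ) {e : E} (he : (vert e).Nonempty) :
    p (owner vert p e) ≤ p e := by
  obtain ⟨f, hf, hfe, hle⟩ := exists_matched_incident_le p he
  exact ((owner_spec p he).2 f hf hfe).trans hle

theorem owner_eq_of_forall_le {p : E → ℕ} (hp : Function.Injective p) {e f : E}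
    (he : (vert e).Nonempty) (hf : Matched vert p f) (hfe : Incident vert f e)
    (hmin : ∀ f', Matched vert p f' → Incident vert f' e → p f ≤ p f') :
    owner vert p e = f :=
  have ⟨⟨hmatched, hinc⟩, hle⟩ := owner_spec p he
  hp <| le_antisymm (hle f hf hfe) (hmin _ hmatched hinc)

theorem owner_comp_swap [DecidableEq E] {p : E → ℕ} (hp : Function.Injective p)
    (hne : ∀ e, (vert e).Nonempty) {d e : E} (hd : owner vert p d = d)
    (he : owner vert p e = d) (hed : e ≠ d) :
    owner vert (p ∘ Equiv.swap d e) d = e := by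
  set q := p ∘ Equiv.swap d e
  have hqd : q d = p e := by simp [q]
  have hqe : q e = p d := by simp [q]
  have hq_of_ne : ∀ f, f ≠ d → f ≠ e → q f = p f := fun f h₁ h₂ => by
    simp [q, Equiv.swap_apply_of_ne_of_ne h₁ h₂]
  have hde : p d < p e := lt_of_le_of_ne (he ▸ owner_le_self p (hne e)) (hp.ne hed.symm)
  have hagree : ∀ f, p f < p d ∨ q f < p d → p f = q f := by
    intro f hf
    by_cases h₁ : f = d
    · subst h₁; omega
    by_cases h₂ : f = e
    · subst h₂; omega
    exact (hq_of_ne f h₁ h₂).symm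
  obtain ⟨⟨hd_matched, -⟩, -⟩ := owner_spec p (hne d)
  obtain ⟨⟨-, hde_inc⟩, he_min⟩ := owner_spec p (hne e)
  rw [hd] at hd_matched
  rw [he] at hde_inc he_min
  have hqe_matched : Matched vert q e := by
    refine (matched_iff q e).2 fun g hg hge hgq => ?_
    have hpg : p g = q g := hagree g (.inr (hqe ▸ hg))
    have hgp : Matched vert p g := (matched_iff_of_agree_below hagree (by omega)).2 hgq
    exact absurd (he_min g hgp hge) (by omega)
  refine owner_eq_of_forall_le (p := q) (hp.comp (Equiv.swap d e).injective) (hne d) hqe_matched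
    hde_inc.symm fun f hfq hfd => ?_
  by_contra! hlt
  have hpf : p f = q f := hagree f (.inr (hqe ▸ hlt))
  have hfp : Matched vert p f := (matched_iff_of_agree_below hagree (by omega)).2 hfq
  exact (matched_iff p d).1 hd_matched f (by omega) hfd hfp

end Greedy

section Payment

noncomputable def earlyPerms [DecidableEq V] [Fintype E] [DecidableEq E] {m : ℕ}
    (vert : E → Finset V) (del : Fin m ≃ E) (t : Fin m) : Finset (E ≃ Fin m) :=
  univ.filter fun π => EarlyAt vert (fun e => (π e : ℕ)) del t

variable [DecidableEq V] [Fintype E] [DecidableEq E] {vert : E → Finset V} {m : ℕ}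
  (del : Fin m ≃ E) (t : Fin m)

theorem mem_Uset_self (p : E → ℕ) : del t ∈ Uset vert p del t := by
  simp only [Uset, mem_filter, mem_univ, true_and]
  exact fun s hs h => (Fin.ne_of_lt hs) (del.injective h)

variable {del t}

theorem owner_swap_trans (hne : ∀ e, (vert e).Nonempty) {π : E ≃ Fin m}
    (hπ : del t = owner vert (fun x => (π x : ℕ)) (del t)) {e : E}
    (he : e ∈ (Uset vert (fun x => (π x : ℕ)) del t).erase (del t)) :
    owner vert (fun x => ((Equiv.swap (del t) e).trans π x : ℕ)) (del t) = e := by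
  simp only [Uset, mem_erase, mem_filter, mem_univ, true_and] at he
  exact owner_comp_swap (fun x y h => π.injective (Fin.val_injective h)) hne hπ.symm
    (he.2.1.trans hπ.symm) he.1

theorem sum_card_Uset_sub_one_le (hne : ∀ e, (vert e).Nonempty) :
    ∑ π ∈ (earlyPerms vert del t).filter
        (fun π => del t = owner vert (fun e => (π e : ℕ)) (del t)),
      ((Uset vert (fun e => (π e : ℕ)) del t).card - 1) ≤
    ((earlyPerms vert del t).filter
        (fun π => ¬ del t = owner vert (fun e => (π e : ℕ)) (del t))).card := by
  set A₂ := (earlyPerms vert del t).filter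
    (fun π => del t = owner vert (fun e => (π e : ℕ)) (del t))
  have hsigma : ∑ π ∈ A₂, ((Uset vert (fun e => (π e : ℕ)) del t).card - 1) =
      (A₂.sigma fun π => (Uset vert (fun e => (π e : ℕ)) del t).erase (del t)).card := by
    rw [card_sigma]
    exact sum_congr rfl fun π _ => (card_erase_of_mem (mem_Uset_self del t _)).symm
  rw [hsigma]
  refine card_le_card_of_injOn (fun x => (Equiv.swap (del t) x.2).trans x.1)
    (fun x hx => ?_) (fun x hx y hy hxy => ?_)
  · simp only [coe_sigma, Set.mem_sigma_iff, mem_coe, A₂, mem_filter] at hx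
    have howner := owner_swap_trans hne hx.1.2 hx.2
    simp only [Uset, mem_erase, mem_filter, mem_univ, true_and] at hx
    refine mem_coe.2 (mem_filter.2 ⟨mem_filter.2 ⟨mem_univ _, fun s hs => ?_⟩, ?_⟩)
    · rw [howner]
      exact hx.2.2.2 s hs
    · rw [howner]
      exact Ne.symm hx.2.1
  · simp only [coe_sigma, Set.mem_sigma_iff, mem_coe, A₂, mem_filter] at hx hy
    have he : x.2 = y.2 := by
      rw [← owner_swap_trans hne hx.1.2 hx.2, ← owner_swap_trans hne hy.1.2 hy.2]
      exact congrArg (fun π : E ≃ Fin m => owner vert (fun e => (π e : ℕ)) (del t)) hxy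
    obtain ⟨π₁, e⟩ := x
    obtain ⟨π₂, e'⟩ := y
    obtain rfl : e = e' := he
    have hπ : π₁ = π₂ := Equiv.ext fun z => by
      simpa using congrArg (fun π : E ≃ Fin m => π (Equiv.swap (del t) e z)) hxy
    rw [hπ]

theorem sum_payment_le (hne : ∀ e, (vert e).Nonempty) :
    ∑ π ∈ earlyPerms vert del t, payment vert (fun e => (π e : ℕ)) del t ≤
      2 * (earlyPerms vert del t).card := by
  set P := fun π : E ≃ Fin m => del t = owner vert (fun e => (π e : ℕ)) (del t)
  set A := earlyPerms vert del t
  have hsplit : ∑ π ∈ A, payment vert (fun e => (π e : ℕ)) del t =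
      ∑ π ∈ A.filter P, (Uset vert (fun e => (π e : ℕ)) del t).card +
        (A.filter fun π => ¬ P π).card := by
    have hpay : ∀ π ∈ A, payment vert (fun e => (π e : ℕ)) del t =
        if P π then (Uset vert (fun e => (π e : ℕ)) del t).card else 1 :=
      fun π hπ => if_pos (mem_filter.1 hπ).2
    rw [sum_congr rfl hpay, sum_ite, sum_const, smul_eq_mul, mul_one]
  have hUset : ∑ π ∈ A.filter P, (Uset vert (fun e => (π e : ℕ)) del t).card =
      ∑ π ∈ A.filter P, ((Uset vert (fun e => (π e : ℕ)) del t).card - 1) +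
        (A.filter P).card := by
    rw [card_eq_sum_ones, ← sum_add_distrib]
    exact sum_congr rfl fun π _ =>
      (Nat.sub_add_cancel (card_pos.2 ⟨_, mem_Uset_self del t _⟩)).symm
  have hcard := card_filter_add_card_filter_not (s := A) (p := P)
  have hkey : ∑ π ∈ A.filter P, ((Uset vert (fun e => (π e : ℕ)) del t).card - 1) ≤
      (A.filter fun π => ¬ P π).card := sum_card_Uset_sub_one_le hne
  omega

end Payment

theorem stmt5_general [DecidableEq V] [Fintype E] [DecidableEq E] {m : ℕ}
    (vert : E → Finset V) (hne : ∀ e : E, (vert e).Nonempty)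
    (del : Fin m ≃ E) (t : Fin m) :
    let A : Finset (E ≃ Fin m) :=
      Finset.univ.filter fun π : E ≃ Fin m => EarlyAt vert (fun e => (π e : ℕ)) del t
    -- if the event that the deletion of `d_t` is early has positive probability,
    A.Nonempty →
    -- then the conditional expectation of the payment is at most `2`
    (∑ π ∈ A, (payment vert (fun e => (π e : ℕ)) del t : ℝ)) / (A.card : ℝ) ≤ 2 := by
  intro A hA
  have hpos : (0 : ℝ) < A.card := by exact_mod_cast hA.card_pos
  rw [div_le_iff₀ hpos]
  exact_mod_cast sum_payment_le (del := del) (t := t) hne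

theorem stmt5 [DecidableEq V] [Fintype E] [DecidableEq E] {m : ℕ}
    (vert : E → Finset V) (hne : ∀ e : E, (vert e).Nonempty)
    (hm : Fintype.card E = m) (del : Fin m ≃ E) (t : Fin m) :
    let A : Finset (E ≃ Fin m) :=
      Finset.univ.filter fun π : E ≃ Fin m => EarlyAt vert (fun e => (π e : ℕ)) del t
    -- if the event that the deletion of `d_t` is early has positive probability,
    A.Nonempty →
    -- then the conditional expectation of the payment is at most `2`
    (∑ π ∈ A, (payment vert (fun e => (π e : ℕ)) del t : ℝ)) / (A.card : ℝ) ≤ 2 :=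
  stmt5_general vert hne del t
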